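/- Let T be a Kurepa tree. Then there is no sequence ⟨B_α : α < ω1⟩ of countable sets of cofinal branches of T which is increasing (B_ξ ⊆ B_α for ξ ≤ α) and continuous (B_δ = ⋃_{ξ<δ} B_ξ for limit δ) such that the set {δ < ω1 : for every t ∈ T_δ there exists b ∈ B_δ with t ∈ b} contains a club of ω1. -/

import Mathlib

noncomputable section

/-- The first uncountable ordinal ω₁. -/
def omega1 : Ordinal := (Cardinal.aleph 1).ord

/-- `ht` is the height function of the partial order `T`: the strict predecessors of every
element are well-ordered, and `ht t` is the order type of the set of strict predecessors. -/
def HeightFun (T : Type) [PartialOrder T] (ht : T → Ordinal) : Prop :=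
  ∀ t : T, ∃ w : IsWellOrder {s : T // s < t} (· < ·),
    ht t = @Ordinal.type {s : T // s < t} (· < ·) w

/-- The α-th level of `T`: the set of elements of height α. -/
def Level {T : Type} [PartialOrder T] (ht : T → Ordinal) (α : Ordinal) : Set T :=
  {t | ht t = α}

/-- `T` is an ω₁-tree (with height function `ht`): it has cardinality ℵ₁, the strict
predecessors of every element are well-ordered with order type `ht t`, every element has
countable height, and every level `T_α` (α < ω₁) is countable and nonempty. -/
def IsOmega1Tree (T : Type) [PartialOrder T] (ht : T → Ordinal) : Prop :=
  HeightFun T ht ∧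
  Cardinal.mk T = Cardinal.aleph 1 ∧
  (∀ t : T, ht t < omega1) ∧
  (∀ α : Ordinal, α < omega1 → (Level ht α).Countable ∧ (Level ht α).Nonempty)

/-- A branch of `T` is a downward closed chain. -/
def IsBranch {T : Type} [PartialOrder T] (b : Set T) : Prop :=
  IsChain (· ≤ ·) b ∧ ∀ s t : T, t ∈ b → s ≤ t → s ∈ b

/-- A cofinal branch of `T` is a branch meeting every level `T_α`, α < ω₁. -/
def IsCofinalBranch {T : Type} [PartialOrder T] (ht : T → Ordinal) (b : Set T) : Prop :=
  IsBranch b ∧ ∀ α : Ordinal, α < omega1 → ∃ t ∈ b, ht t = α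

/-- The set of cofinal branches of `T`. -/
def CofinalBranches (T : Type) [PartialOrder T] (ht : T → Ordinal) : Set (Set T) :=
  {b | IsCofinalBranch ht b}

/-- The set of cofinal branches of `T` passing through `x`; this set is in natural bijection
with the set of cofinal branches of the cone `T_x`. -/
def BranchesThrough {T : Type} [PartialOrder T] (ht : T → Ordinal) (x : T) : Set (Set T) :=
  {b | IsCofinalBranch ht b ∧ x ∈ b}

/-- A Kurepa tree is an ω₁-tree with at least ℵ₂ cofinal branches. -/
def IsKurepaTree (T : Type) [PartialOrder T] (ht : T → Ordinal) : Prop :=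
  IsOmega1Tree T ht ∧ Cardinal.aleph 2 ≤ Cardinal.mk ↥(CofinalBranches T ht)

/-- `T` is everywhere Kurepa: it is an ω₁-tree and for every `x ∈ T` the cone `T_x` has at
least ℵ₂ cofinal branches, i.e. at least ℵ₂ cofinal branches of `T` pass through `x`. -/
def IsEverywhereKurepa (T : Type) [PartialOrder T] (ht : T → Ordinal) : Prop :=
  IsOmega1Tree T ht ∧ ∀ x : T, Cardinal.aleph 2 ≤ Cardinal.mk ↥(BranchesThrough ht x)

/-- `C` is a club (closed unbounded subset) of ω₁. -/
def IsClubOmega1 (C : Set Ordinal) : Prop :=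
  (∀ α ∈ C, α < omega1) ∧
  (∀ α < omega1, ∃ β ∈ C, α ≤ β) ∧
  (∀ α < omega1, Order.IsSuccLimit α → (∀ β < α, ∃ γ ∈ C, β < γ ∧ γ < α) → α ∈ C)

/-- `T↾A`: the set of elements of `T` whose height lies in `A`. -/
def Restrict (T : Type) [PartialOrder T] (ht : T → Ordinal) (A : Set Ordinal) : Set T :=
  {t | ht t ∈ A}

/-- `T` and `S` are club isomorphic: there is a club `C ⊆ ω₁` such that `T↾C` and `S↾C`
(with the induced orders) are order isomorphic. -/
def ClubIsomorphic (T : Type) [PartialOrder T] (htT : T → Ordinal)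
    (S : Type) [PartialOrder S] (htS : S → Ordinal) : Prop :=
  ∃ C : Set Ordinal, IsClubOmega1 C ∧
    Nonempty (↥(Restrict T htT C) ≃o ↥(Restrict S htS C))

/-!
The sets `B_α` together hold at most `ℵ₁` branches, so the Kurepa tree has a cofinal branch `b`
outside all of them. Every branch of a countable `B_ξ` leaves `b` below some countable height
`γ ξ`. A limit point `δ` of the club closed under `γ` then has every branch of
`B_δ = ⋃_{ξ<δ} B_ξ` leaving `b` below `δ`, so none of them passes through the node of `b` at
height `δ`.
-/

open Cardinal Ordinal Set

theorem omega1_eq_omega_one : omega1 = ω₁ :=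
  ord_aleph 1

theorem isSuccLimit_omega1 : Order.IsSuccLimit omega1 :=
  omega1_eq_omega_one ▸ isSuccLimit_omega 1

theorem countable_Iio_of_lt_omega1 {x : Ordinal} (hx : x < omega1) : (Iio x).Countable := by
  rw [omega1_eq_omega_one, lt_omega_iff_card_lt, lt_aleph_one_iff] at hx
  rw [← le_aleph0_iff_set_countable, Cardinal.mk_Iio_ordinal, lift_le_aleph0]
  exact hx

theorem iSup_lt_omega1 {ι : Type*} [Countable ι] {f : ι → Ordinal} (hf : ∀ i, f i < omega1) :
    ⨆ i, f i < omega1 :=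
  omega1_eq_omega_one ▸ iSup_lt_omega_one (omega1_eq_omega_one ▸ hf)

theorem exists_lt_omega1_forall_lt {ι : Type*} [Countable ι] {f : ι → Ordinal}
    (hf : ∀ i, f i < omega1) : ∃ γ < omega1, ∀ i, f i < γ := by
  refine ⟨⨆ i, f i + 1, iSup_lt_omega1 fun i ↦ ?_, lt_iSup_add_one f⟩
  rw [← Order.succ_eq_add_one]
  exact isSuccLimit_omega1.succ_lt (hf i)

namespace IsClubOmega1

variable {C : Set Ordinal} (hC : IsClubOmega1 C)
include hC

theorem exists_gt {x : Ordinal} (hx : x < omega1) : ∃ γ ∈ C, x < γ := by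
  obtain ⟨γ, hγC, hγ⟩ := hC.2.1 (Order.succ x) (isSuccLimit_omega1.succ_lt hx)
  exact ⟨γ, hγC, Order.succ_le_iff.1 hγ⟩

theorem exists_isSuccLimit_forall_lt {h : Ordinal → Ordinal} (hh : ∀ ξ < omega1, h ξ < omega1) :
    ∃ δ ∈ C, Order.IsSuccLimit δ ∧ ∀ ξ < δ, h ξ < δ := by
  have step : ∀ x < omega1, ∃ γ ∈ C, x < γ ∧ ∀ ξ < x, h ξ < γ := by
    intro x hx
    have := (countable_Iio_of_lt_omega1 hx).to_subtype
    obtain ⟨γ₀, hγ₀, hbound⟩ := exists_lt_omega1_forall_lt fun ξ : Iio x ↦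
      hh ξ (ξ.2.trans hx)
    obtain ⟨γ, hγC, hγ⟩ := hC.exists_gt (max_lt hx hγ₀)
    exact ⟨γ, hγC, (le_max_left _ _).trans_lt hγ,
      fun ξ hξ ↦ (hbound ⟨ξ, hξ⟩).trans ((le_max_right _ _).trans_lt hγ)⟩
  choose! next hnextC hnext_gt hnext_bound using step
  set D : ℕ → Ordinal := fun n ↦ next^[n + 1] 0
  have hD_succ (n : ℕ) : D (n + 1) = next (D n) := Function.iterate_succ_apply' next (n + 1) 0
  have hD_lt (n : ℕ) : D n < omega1 := by
    induction n with
    | zero => exact hC.1 _ (hnextC 0 isSuccLimit_omega1.bot_lt)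
    | succ n ih => exact hD_succ n ▸ hC.1 _ (hnextC _ ih)
  have hD_mem (n : ℕ) : D (n + 1) ∈ C := hD_succ n ▸ hnextC _ (hD_lt n)
  have hD_lt_succ (n : ℕ) : D n < D (n + 1) := hD_succ n ▸ hnext_gt _ (hD_lt n)
  have hD_lt_sup (n : ℕ) : D n < ⨆ k, D k :=
    (hD_lt_succ n).trans_le (Ordinal.le_iSup D (n + 1))
  have hlim : Order.IsSuccLimit (⨆ k, D k) := by
    refine ⟨not_isMin_of_lt (hD_lt_sup 0), Order.isSuccPrelimit_of_succ_lt fun a ha ↦ ?_⟩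
    obtain ⟨n, hn⟩ := Ordinal.lt_iSup_iff.1 ha
    exact (Order.succ_le_of_lt hn).trans_lt (hD_lt_sup n)
  refine ⟨⨆ k, D k, hC.2.2 _ (iSup_lt_omega1 hD_lt) hlim ?_, hlim, ?_⟩
  · intro β hβ
    obtain ⟨n, hn⟩ := Ordinal.lt_iSup_iff.1 hβ
    exact ⟨D (n + 1), hD_mem n, hn.trans (hD_lt_succ n), hD_lt_sup (n + 1)⟩
  · intro ξ hξ
    obtain ⟨n, hn⟩ := Ordinal.lt_iSup_iff.1 hξ
    exact (hD_succ n ▸ hnext_bound _ (hD_lt n) ξ hn).trans (hD_lt_sup (n + 1))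

end IsClubOmega1

variable {T : Type} [PartialOrder T] {ht : T → Ordinal}

theorem HeightFun.strictMono (H : HeightFun T ht) : StrictMono ht := by
  intro s t hst
  obtain ⟨wt, het⟩ := H t
  obtain ⟨ws, hes⟩ := H s
  have : ht s = typein (α := {r : T // r < t}) (· < ·) ⟨s, hst⟩ := by
    rw [← type_subrel, hes]
    exact RelIso.ordinalType_congr
      { toFun r := ⟨⟨r.1, r.2.trans hst⟩, r.2⟩
        invFun r := ⟨r.1.1, r.2⟩
        map_rel_iff' := Iff.rfl }
  rw [this, het]
  exact typein_lt_type _ _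

theorem IsChain.le_of_apply_lt {α β : Type*} [PartialOrder α] [Preorder β] {b : Set α}
    (hb : IsChain (· ≤ ·) b) {f : α → β} (hf : StrictMono f) {s t : α} (hs : s ∈ b) (ht : t ∈ b)
    (hst : f s < f t) : s ≤ t :=
  (hb.total hs ht).resolve_right fun hts ↦ (hf.monotone hts).not_gt hst

theorem IsChain.eq_of_apply_eq {α β : Type*} [PartialOrder α] [Preorder β] {b : Set α}
    (hb : IsChain (· ≤ ·) b) {f : α → β} (hf : StrictMono f) {s t : α} (hs : s ∈ b) (ht : t ∈ b)
    (hst : f s = f t) : s = t := by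
  rcases hb.total hs ht with h | h
  · exact h.eq_of_not_lt fun h' ↦ (hf h').ne hst
  · exact (h.eq_of_not_lt fun h' ↦ (hf h').ne hst.symm).symm

namespace IsCofinalBranch

variable (hT : IsOmega1Tree T ht) {b : Set T} (hb : IsCofinalBranch ht b)
include hT hb

theorem eq_of_subset {b' : Set T} (hb' : IsBranch b') (hsub : b ⊆ b') : b = b' := by
  refine hsub.antisymm fun t htb' ↦ ?_
  obtain ⟨s, hsb, hst⟩ := hb.2 (ht t) (hT.2.2.1 t)
  rwa [← hb'.1.eq_of_apply_eq hT.1.strictMono (hsub hsb) htb' hst]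

theorem exists_lt_omega1_forall_exists_notMem {S : Set (Set T)} (hS : S.Countable)
    (hS_branch : ∀ b' ∈ S, IsBranch b') (hbS : b ∉ S) :
    ∃ γ < omega1, ∀ b' ∈ S, ∃ s ∈ b, ht s < γ ∧ s ∉ b' := by
  have hsep (b' : S) : ∃ s ∈ b, s ∉ (b' : Set T) :=
    not_subset.1 fun hsub ↦ hbS (hb.eq_of_subset hT (hS_branch _ b'.2) hsub ▸ b'.2)
  choose sep hsep_mem hsep_notMem using hsep
  have := hS.to_subtype
  obtain ⟨γ, hγ, hbound⟩ := exists_lt_omega1_forall_lt fun b' ↦ hT.2.2.1 (sep b')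
  exact ⟨γ, hγ, fun b' hb' ↦ ⟨_, hsep_mem ⟨b', hb'⟩, hbound _, hsep_notMem ⟨b', hb'⟩⟩⟩

end IsCofinalBranch

theorem IsKurepaTree.exists_cofinalBranch_forall_notMem (hT : IsKurepaTree T ht)
    {B : Ordinal → Set (Set T)} (hB : ∀ α < omega1, (B α).Countable) :
    ∃ b ∈ CofinalBranches T ht, ∀ α < omega1, b ∉ B α := by
  have hU : #↥(⋃ α < omega1, B α) < ℵ_ 2 := by
    refine (mk_biUnion_le_of_le_lift (c := ℵ₁) ?_ (aleph0_le_aleph 1) B fun α hα ↦ ?_).trans_lt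
      (aleph_lt_aleph.2 one_lt_two)
    · rw [omega1, card_ord]
      simp
    · exact (le_aleph0_iff_set_countable.2 (hB α hα)).trans (aleph0_le_aleph 1)
  by_contra! hall
  refine (hT.2.trans (mk_le_mk_of_subset fun b hb ↦ ?_)).not_gt hU
  obtain ⟨α, hα, hbα⟩ := hall b hb
  exact mem_biUnion hα hbα

/-- if `T` is a Kurepa tree, there is no increasing continuous sequence
`⟨B_α : α < ω₁⟩` of countable sets of cofinal branches of `T` such that the set of `δ < ω₁`
at which every node of height `δ` lies on a branch from `B_δ` contains a club of ω₁. -/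
theorem kurepa_no_small_branch_capture
    (T : Type) [PartialOrder T] (ht : T → Ordinal) (hT : IsKurepaTree T ht) :
    ¬ ∃ B : Ordinal → Set (Set T),
      (∀ α < omega1, (B α).Countable ∧ B α ⊆ CofinalBranches T ht) ∧
      (∀ ξ α : Ordinal, ξ ≤ α → α < omega1 → B ξ ⊆ B α) ∧
      (∀ δ < omega1, Order.IsSuccLimit δ → B δ = ⋃ ξ ∈ Set.Iio δ, B ξ) ∧
      (∃ C : Set Ordinal, IsClubOmega1 C ∧
        C ⊆ {δ : Ordinal | ∀ t : T, ht t = δ → ∃ b ∈ B δ, t ∈ b}) := by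
  rintro ⟨B, hB, -, hB_cont, C, hC, hC_capture⟩
  have hB_branch (ξ : Ordinal) (hξ : ξ < omega1) (b' : Set T) (hb' : b' ∈ B ξ) : IsBranch b' :=
    ((hB ξ hξ).2 hb').1
  obtain ⟨b, hb, hb_new⟩ := hT.exists_cofinalBranch_forall_notMem fun α hα ↦ (hB α hα).1
  have hescape (ξ : Ordinal) (hξ : ξ < omega1) :=
    hb.exists_lt_omega1_forall_exists_notMem hT.1 (hB ξ hξ).1 (hB_branch ξ hξ) (hb_new ξ hξ)
  choose! γ hγ_lt hγ using hescape
  obtain ⟨δ, hδC, hδ_lim, hδ⟩ := hC.exists_isSuccLimit_forall_lt hγ_lt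
  have hδ_lt := hC.1 δ hδC
  obtain ⟨t, htb, htδ⟩ := hb.2 δ hδ_lt
  obtain ⟨b', hb'δ, htb'⟩ := hC_capture hδC t htδ
  obtain ⟨ξ, hξδ, hb'ξ⟩ := mem_iUnion₂.1 (hB_cont δ hδ_lt hδ_lim ▸ hb'δ)
  have hξ : ξ < omega1 := (mem_Iio.1 hξδ).trans hδ_lt
  obtain ⟨s, hsb, hs_lt, hsb'⟩ := hγ ξ hξ b' hb'ξ
  have hst : s ≤ t :=
    hb.1.1.le_of_apply_lt hT.1.1.strictMono hsb htb (htδ ▸ hs_lt.trans (hδ ξ hξδ))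
  exact hsb' ((hB_branch ξ hξ b' hb'ξ).2 s t htb' hst)
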